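/- arXiv:1506.00226 — 3 statements merged into one kernel-verified Lean document; each statement's English description precedes it below -/
import Mathlib

section
/- Let a, b > 0 and v ∈ (0, 1) with 0 < v ≤ 1/2. Then (1 − v)a + v·b ≥ v(√a − √b)² + r₁(⁴√(ab) − √a)² + K(⁴√h, 2)^{r̂₁} · a^{1−v} b^{v}, where h = b/a, r = min{v, 1 − v}, r₁ = min{2r, 1 − 2r} and r̂₁ = min{2r₁, 1 − 2r₁}. -/
/-!
Subtracting `w (√x - √y)²` from the weighted mean `(1 - w) x + w y` (for `w ≤ 1/2`) leaves the
weighted mean `(1 - 2w) x + 2w √(xy)` of `x` and the geometric mean `√(xy)`, with weights doubled.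
So every refinement of Young's inequality by a square term can be fed back into itself. Starting from
the Kantorovich form `K(q/p)^{min(s, 1-s)} p^{1-s} q^s ≤ (1-s) p + s q` (itself weighted AM-GM for
`p` and `(p+q)/2`), two such reductions give the theorem: the pair `(a, b)` becomes `(a, √(ab))`
with weight `2v`, whose ratio has square root `(b/a)^{1/4}`.
-/

/-- The Kantorovich constant `K(t, 2) = (t + 1)^2 / (4 t)`. -/
noncomputable def Kant (t : ℝ) : ℝ := (t + 1) ^ 2 / (4 * t)

open Real

lemma kant_inv (t : ℝ) : Kant t⁻¹ = Kant t := by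
  rcases eq_or_ne t 0 with rfl | ht
  · simp
  · unfold Kant
    field_simp
    ring

lemma kant_pos {t : ℝ} (ht : 0 < t) : 0 < Kant t := by
  unfold Kant
  positivity

lemma kant_div_mul_mul {p q : ℝ} (hp : 0 < p) (hq : 0 < q) :
    Kant (q / p) * (p * q) = ((p + q) / 2) ^ 2 := by
  unfold Kant
  field_simp
  ring

lemma kant_young_of_le_half {p q s : ℝ} (hp : 0 < p) (hq : 0 < q) (hs0 : 0 ≤ s) (hs : s ≤ 1 / 2) :
    Kant (q / p) ^ s * (p ^ (1 - s) * q ^ s) ≤ (1 - s) * p + s * q := by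
  set c := (p + q) / 2
  have hc : 0 < c := by positivity
  have hgeom : Kant (q / p) ^ s * (p ^ (1 - s) * q ^ s) = p ^ (1 - 2 * s) * c ^ (2 * s) := by
    calc Kant (q / p) ^ s * (p ^ (1 - s) * q ^ s)
        = p ^ (1 - 2 * s) * (Kant (q / p) * (p * q)) ^ s := by
          rw [mul_rpow (kant_pos (by positivity)).le (by positivity), mul_rpow hp.le hq.le,
            show 1 - s = 1 - 2 * s + s by ring, rpow_add hp]
          ring
      _ = p ^ (1 - 2 * s) * c ^ (2 * s) := by
          rw [kant_div_mul_mul hp hq, ← rpow_natCast, ← rpow_mul hc.le]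
          norm_num
  calc Kant (q / p) ^ s * (p ^ (1 - s) * q ^ s)
      = p ^ (1 - 2 * s) * c ^ (2 * s) := hgeom
    _ ≤ (1 - 2 * s) * p + 2 * s * c :=
        geom_mean_le_arith_mean2_weighted (by linarith) (by linarith) hp.le hc.le (by ring)
    _ = (1 - s) * p + s * q := by ring

lemma kant_young {p q s : ℝ} (hp : 0 < p) (hq : 0 < q) (hs0 : 0 ≤ s) (hs1 : s ≤ 1) :
    Kant (q / p) ^ min s (1 - s) * (p ^ (1 - s) * q ^ s) ≤ (1 - s) * p + s * q := by
  rcases le_or_gt s (1 / 2) with hs | hs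
  · rw [min_eq_left (by linarith)]
    exact kant_young_of_le_half hp hq hs0 hs
  · rw [min_eq_right (by linarith)]
    have H := kant_young_of_le_half hq hp (s := 1 - s) (by linarith) (by linarith)
    rw [← inv_div, kant_inv, sub_sub_cancel] at H
    linarith [mul_comm (q ^ s) (p ^ (1 - s))]

lemma weighted_mean_sub_mul_sq_sqrt_sub {x y : ℝ} (hx : 0 ≤ x) (hy : 0 ≤ y) (w : ℝ) :
    (1 - w) * x + w * y - w * (√x - √y) ^ 2 = (1 - 2 * w) * x + 2 * w * √(x * y) := by
  rw [sub_sq, sq_sqrt hx, sq_sqrt hy, sqrt_mul hx]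
  ring

lemma rpow_mul_sqrt_mul_rpow {x y : ℝ} (hx : 0 < x) (hy : 0 ≤ y) (w : ℝ) :
    x ^ (1 - 2 * w) * √(x * y) ^ (2 * w) = x ^ (1 - w) * y ^ w := by
  rw [sqrt_eq_rpow, ← rpow_mul (by positivity), show 1 / 2 * (2 * w) = w by ring,
    mul_rpow hx.le hy, ← mul_assoc, ← rpow_add hx]
  ring_nf

lemma sqrt_mul_div_self {x : ℝ} (hx : 0 < x) (y : ℝ) : √(x * y) / x = √(y / x) := by
  rw [sqrt_mul hx.le, sqrt_div' _ hx.le]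
  nth_rw 2 [← mul_self_sqrt hx.le]
  field_simp

lemma sqrt_sqrt_eq_rpow {x : ℝ} (hx : 0 ≤ x) : √(√x) = x ^ ((1 : ℝ) / 4) := by
  rw [sqrt_eq_rpow, sqrt_eq_rpow, ← rpow_mul hx]
  norm_num

lemma kant_young_refined_of_le_half {x y w : ℝ} (hx : 0 < x) (hy : 0 < y) (hw0 : 0 ≤ w)
    (hw : w ≤ 1 / 2) :
    w * (√x - √y) ^ 2 + Kant √(y / x) ^ min (2 * w) (1 - 2 * w) * (x ^ (1 - w) * y ^ w)
      ≤ (1 - w) * x + w * y := by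
  have H := kant_young hx (sqrt_pos.mpr (mul_pos hx hy)) (s := 2 * w) (by linarith) (by linarith)
  rw [sqrt_mul_div_self hx y, rpow_mul_sqrt_mul_rpow hx hy.le] at H
  linarith [weighted_mean_sub_mul_sq_sqrt_sub hx.le hy.le w]

lemma kant_young_refined {x y w : ℝ} (hx : 0 < x) (hy : 0 < y) (hw0 : 0 ≤ w) (hw1 : w ≤ 1) :
    min w (1 - w) * (√x - √y) ^ 2
        + Kant √(y / x) ^ min (2 * min w (1 - w)) (1 - 2 * min w (1 - w)) * (x ^ (1 - w) * y ^ w)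
      ≤ (1 - w) * x + w * y := by
  rcases le_or_gt w (1 / 2) with hw | hw
  · rw [min_eq_left (by linarith)]
    exact kant_young_refined_of_le_half hx hy hw0 hw
  · rw [min_eq_right (by linarith)]
    have H := kant_young_refined_of_le_half hy hx (w := 1 - w) (by linarith) (by linarith)
    rw [← inv_div, sqrt_inv, kant_inv, sub_sub_cancel, ← neg_sub √x, neg_sq] at H
    linarith [mul_comm (y ^ w) (x ^ (1 - w))]

theorem stmt_0 (a b v : ℝ) (ha : 0 < a) (hb : 0 < b) (hv0 : 0 < v) (hv : v ≤ 1 / 2)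
    (h r r1 rh1 : ℝ) (hh : h = b / a) (hr : r = min v (1 - v))
    (hr1 : r1 = min (2 * r) (1 - 2 * r)) (hrh1 : rh1 = min (2 * r1) (1 - 2 * r1)) :
    (1 - v) * a + v * b ≥
      v * (Real.sqrt a - Real.sqrt b) ^ 2
        + r1 * ((a * b) ^ ((1 : ℝ) / 4) - Real.sqrt a) ^ 2
        + Kant (h ^ ((1 : ℝ) / 4)) ^ rh1 * (a ^ (1 - v) * b ^ v) := by
  rw [min_eq_left (by linarith)] at hr
  subst hr hh hr1 hrh1
  have hab : 0 ≤ a * b := by positivity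
  have H := kant_young_refined ha (sqrt_pos.mpr (mul_pos ha hb)) (w := 2 * r)
    (by linarith) (by linarith)
  rw [sqrt_mul_div_self ha b, sqrt_sqrt_eq_rpow (div_pos hb ha).le,
    sqrt_sqrt_eq_rpow hab, rpow_mul_sqrt_mul_rpow ha hb.le,
    ← neg_sub ((a * b) ^ ((1 : ℝ) / 4)), neg_sq] at H
  linarith [weighted_mean_sub_mul_sq_sqrt_sub ha.le hb.le r]
end

section
/- Let a, b > 0 and v ∈ (0, 1) with 0 < v ≤ 1/2. Then ((1 − v)a + v·b)² ≥ v²(a − b)² + r₁(√(ab) − a)² + K(√h, 2)^{r̂₁} · (a^{1−v} b^{v})², where h = b/a, r = min{v, 1 − v}, r₁ = min{2r, 1 − 2r} and r̂₁ = min{2r₁, 1 − 2r₁}. -/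
/-!
Weighted AM-GM between `x` and the arithmetic mean `(x + y) / 2` gives the
Kantorovich refinement `K(y/x)^min(v,1-v) x^(1-v) y^v ≤ (1-v) x + v y` of Young's inequality.
Applying it between `x` and the geometric mean `√(x y)` at weight `2 v` refines it once more,
by `v (√x - √y)^2` and with `K(√(y/x))` in place of `K(y/x)`. The theorem is this second
inequality for `x = a^2`, `y = a b` and weight `2 v`, since
`(1 - 2v) a^2 + 2v a b = ((1 - v) a + v b)^2 - v^2 (a - b)^2`.
-/

open Real

lemma kant_div_comm (x y : ℝ) : Kant (x / y) = Kant (y / x) := by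
  rw [← inv_div, kant_inv]

lemma kant_sqrt_div_comm (x y : ℝ) : Kant √(x / y) = Kant √(y / x) := by
  rw [← inv_div, sqrt_inv, kant_inv]

lemma kant_div_mul_mul_s3 {x y : ℝ} (hx : x ≠ 0) (hy : y ≠ 0) :
    Kant (y / x) * (x * y) = ((x + y) / 2) ^ 2 := by
  unfold Kant
  field_simp
  ring

lemma rpow_one_sub_two_mul_mul_sqrt_mul_rpow {x z : ℝ} (hx : 0 < x) (hz : 0 ≤ z) (v : ℝ) :
    x ^ (1 - 2 * v) * √(x * z) ^ (2 * v) = x ^ (1 - v) * z ^ v := by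
  rw [sqrt_eq_rpow, ← rpow_mul (by positivity), show 1 / 2 * (2 * v) = v by ring,
    mul_rpow hx.le hz, ← mul_assoc, ← rpow_add hx]
  ring_nf

lemma geom_mean_le_arith_mean2_weighted_kant_of_le_half {x y v : ℝ} (hx : 0 < x) (hy : 0 < y)
    (hv0 : 0 ≤ v) (hv : v ≤ 1 / 2) :
    Kant (y / x) ^ v * (x ^ (1 - v) * y ^ v) ≤ (1 - v) * x + v * y := by
  have hK : 0 ≤ Kant (y / x) := by unfold Kant; positivity
  have hm : 0 ≤ (x + y) / 2 := by positivity
  calc Kant (y / x) ^ v * (x ^ (1 - v) * y ^ v)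
      = x ^ (1 - 2 * v) * (Kant (y / x) * (x * y)) ^ v := by
        rw [mul_rpow hK (by positivity), mul_rpow hx.le hy.le,
          show 1 - v = 1 - 2 * v + v by ring, rpow_add hx]
        ring
    _ = x ^ (1 - 2 * v) * ((x + y) / 2) ^ (2 * v) := by
        rw [kant_div_mul_mul_s3 hx.ne' hy.ne', ← rpow_natCast_mul hm]
        norm_num
    _ ≤ (1 - 2 * v) * x + 2 * v * ((x + y) / 2) :=
        geom_mean_le_arith_mean2_weighted (by linarith) (by linarith) hx.le hm (by ring)
    _ = (1 - v) * x + v * y := by ring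

lemma geom_mean_le_arith_mean2_weighted_kant {x y v : ℝ} (hx : 0 < x) (hy : 0 < y)
    (hv0 : 0 ≤ v) (hv1 : v ≤ 1) :
    Kant (y / x) ^ min v (1 - v) * (x ^ (1 - v) * y ^ v) ≤ (1 - v) * x + v * y := by
  rcases le_total v (1 / 2) with hv | hv
  · rw [min_eq_left (by linarith)]
    exact geom_mean_le_arith_mean2_weighted_kant_of_le_half hx hy hv0 hv
  · rw [min_eq_right (by linarith)]
    have := geom_mean_le_arith_mean2_weighted_kant_of_le_half hy hx
      (v := 1 - v) (by linarith) (by linarith)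
    rw [kant_div_comm, sub_sub_cancel, mul_comm (y ^ v)] at this
    linarith

lemma geom_mean_add_sq_sqrt_sub_le_arith_mean2_weighted_kant_of_le_half {x y v : ℝ}
    (hx : 0 < x) (hy : 0 < y) (hv0 : 0 ≤ v) (hv : v ≤ 1 / 2) :
    Kant √(y / x) ^ min (2 * v) (1 - 2 * v) * (x ^ (1 - v) * y ^ v)
      + v * (√x - √y) ^ 2 ≤ (1 - v) * x + v * y := by
  have hxy : 0 ≤ x * y := by positivity
  have hG := geom_mean_le_arith_mean2_weighted_kant hx (sqrt_pos.2 (mul_pos hx hy))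
    (v := 2 * v) (by linarith) (by linarith)
  have hratio : √(x * y) / x = √(y / x) := by
    rw [← sqrt_sq hx.le, ← sqrt_div' _ (sq_nonneg x), sqrt_sq hx.le]
    congr 1
    field_simp
  rw [hratio, rpow_one_sub_two_mul_mul_sqrt_mul_rpow hx hy.le] at hG
  have hsq : (√x - √y) ^ 2 = x + y - 2 * √(x * y) := by
    rw [sub_sq, sq_sqrt hx.le, sq_sqrt hy.le, sqrt_mul hx.le]
    ring
  rw [hsq]
  linarith

lemma geom_mean_add_sq_sqrt_sub_le_arith_mean2_weighted_kant {x y v : ℝ}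
    (hx : 0 < x) (hy : 0 < y) (hv0 : 0 ≤ v) (hv1 : v ≤ 1) :
    Kant √(y / x) ^ min (2 * min v (1 - v)) (1 - 2 * min v (1 - v)) * (x ^ (1 - v) * y ^ v)
      + min v (1 - v) * (√x - √y) ^ 2 ≤ (1 - v) * x + v * y := by
  rcases le_total v (1 / 2) with hv | hv
  · rw [min_eq_left (by linarith : v ≤ 1 - v)]
    exact geom_mean_add_sq_sqrt_sub_le_arith_mean2_weighted_kant_of_le_half hx hy hv0 hv
  · rw [min_eq_right (by linarith : 1 - v ≤ v)]
    have := geom_mean_add_sq_sqrt_sub_le_arith_mean2_weighted_kant_of_le_half hy hx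
      (v := 1 - v) (by linarith) (by linarith)
    rw [kant_sqrt_div_comm, sub_sub_cancel, mul_comm (y ^ v), sub_sq_comm] at this
    linarith

theorem stmt_3 (a b v : ℝ) (ha : 0 < a) (hb : 0 < b) (hv0 : 0 < v) (hv : v ≤ 1 / 2)
    (h r r1 rh1 : ℝ) (hh : h = b / a) (hr : r = min v (1 - v))
    (hr1 : r1 = min (2 * r) (1 - 2 * r)) (hrh1 : rh1 = min (2 * r1) (1 - 2 * r1)) :
    ((1 - v) * a + v * b) ^ 2 ≥
      v ^ 2 * (a - b) ^ 2 + r1 * (Real.sqrt (a * b) - a) ^ 2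
        + Kant (Real.sqrt h) ^ rh1 * (a ^ (1 - v) * b ^ v) ^ 2 := by
  subst hh hr hr1 hrh1
  rw [min_eq_left (by linarith : v ≤ 1 - v)]
  have key := geom_mean_add_sq_sqrt_sub_le_arith_mean2_weighted_kant (pow_pos ha 2)
    (mul_pos ha hb) (v := 2 * v) (by linarith) (by linarith)
  have hratio : a * b / a ^ 2 = b / a := by field_simp
  have hpow : (a ^ 2) ^ (1 - 2 * v) * (a * b) ^ (2 * v) = (a ^ (1 - v) * b ^ v) ^ 2 := by
    have hab : a * b = √(a ^ 2 * b ^ 2) := by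
      rw [← mul_pow, sqrt_sq (mul_pos ha hb).le]
    rw [hab, rpow_one_sub_two_mul_mul_sqrt_mul_rpow (pow_pos ha 2) (sq_nonneg b),
      ← rpow_pow_comm ha.le, ← rpow_pow_comm hb.le, mul_pow]
  rw [hratio, hpow, sqrt_sq ha.le, sub_sq_comm a] at key
  linear_combination key
end

section
/- Let a, b > 0 and v ∈ (0, 1). Then (a + b)/2 ≤ R(√a − √b)² − (1/2)·r₁·[(⁴√(ab) − √a)² + (⁴√(ab) − √b)²] + K(⁴√h, 2)^{−r̂₁} · H_v(a, b), where h = b/a, r = min{v, 1 − v}, R = max{v, 1 − v}, r₁ = min{2r, 1 − 2r} and r̂₁ = min{2r₁, 1 − 2r₁}. -/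
/-! For `v ≤ 1/2` the weighted mean `(1 - v) a + v b` is homogeneous in `(a, b)`, so with
`τ = (b/a)^(1/4)` it reduces to a one-variable inequality in `τ`. An exact identity splits off
the two square terms and leaves `τ² ((3 - 4v) - (2 - 4v) τ)`, which is at most `K(τ)^(-r̂₁) τ^(4v)`
by inverting the Zuo–Shi–Fujii refinement `K(τ)^min(l, 1-l) τ^l ≤ 1 - l + l τ` of weighted AM–GM.
Averaging with the mirror inequality (`a ↔ b`, using `K(1/t) = K(t)`) gives the claim, and the
case `v > 1/2` follows by `v ↦ 1 - v`. -/

open Real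

lemma kant_mul_self (t : ℝ) (ht : t ≠ 0) : Kant t * t = ((t + 1) / 2) ^ 2 := by
  unfold Kant; field_simp; ring

lemma kant_rpow_mul_rpow_le {τ l : ℝ} (hτ : 0 < τ) (hl0 : 0 ≤ l) (hl : l ≤ 1 / 2) :
    Kant τ ^ l * τ ^ l ≤ 1 - l + l * τ :=
  calc Kant τ ^ l * τ ^ l = (1 + (τ - 1) / 2) ^ (2 * l) := by
        rw [← mul_rpow (kant_pos hτ).le hτ.le, kant_mul_self τ hτ.ne',
          ← rpow_natCast_mul (by positivity), Nat.cast_ofNat]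
        ring_nf
    _ ≤ 1 + 2 * l * ((τ - 1) / 2) :=
        rpow_one_add_le_one_add_mul_self (by linarith) (by linarith) (by linarith)
    _ = 1 - l + l * τ := by ring

lemma kant_rpow_min_mul_rpow_le {τ l : ℝ} (hτ : 0 < τ) (hl0 : 0 ≤ l) (hl1 : l ≤ 1) :
    Kant τ ^ min l (1 - l) * τ ^ l ≤ 1 - l + l * τ := by
  rcases le_total l (1 / 2) with hl | hl
  · rw [min_eq_left (by linarith)]
    exact kant_rpow_mul_rpow_le hτ hl0 hl
  · rw [min_eq_right (by linarith)]
    -- the case `l ≥ 1/2` is the case `1 - l ≤ 1/2` at `τ⁻¹`, multiplied by `τ`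
    have h := kant_rpow_mul_rpow_le (inv_pos.2 hτ) (by linarith) (by linarith : 1 - l ≤ 1 / 2)
    rw [kant_inv, inv_rpow hτ.le, ← rpow_neg hτ.le, neg_sub, rpow_sub_one hτ.ne'] at h
    have := mul_le_mul_of_nonneg_left h hτ.le
    field_simp at this
    linarith

lemma le_inv_of_mul_le_one_of_le {c w z : ℝ} (hz : 0 < z) (hzw : z ≤ w) (hcw : c * w ≤ 1) :
    c ≤ z⁻¹ :=
  calc c ≤ w⁻¹ := by rw [← one_div, le_div_iff₀ (hz.trans_le hzw)]; exact hcw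
    _ ≤ z⁻¹ := inv_anti₀ hz hzw

lemma one_add_sub_mul_le_inv_kant {τ l : ℝ} (hτ : 0 < τ) (hl0 : 0 ≤ l) (hl1 : l ≤ 1) :
    1 + l - l * τ ≤ (Kant τ ^ min l (1 - l) * τ ^ l)⁻¹ := by
  refine le_inv_of_mul_le_one_of_le (by have := kant_pos hτ; positivity)
    (kant_rpow_min_mul_rpow_le hτ hl0 hl1) ?_
  nlinarith [sq_nonneg (l * (1 - τ))]

lemma two_add_sub_mul_le_inv_kant {τ l : ℝ} (hτ : 0 < τ) (hl0 : 0 ≤ l) (hl1 : l ≤ 1) :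
    2 + l - (1 + l) * τ ≤ (Kant τ ^ min l (1 - l) * τ ^ (l + 1))⁻¹ := by
  have hK := kant_pos hτ
  rw [rpow_add_one hτ.ne', ← mul_assoc]
  refine le_inv_of_mul_le_one_of_le (by positivity)
    (mul_le_mul_of_nonneg_right (kant_rpow_min_mul_rpow_le hτ hl0 hl1) hτ.le) ?_
  have : 0 ≤ (τ - 1) ^ 2 * (l * (l + 1) * τ + 1) := by positivity
  nlinarith

/-- In the paper's notation `r₁ = refineExponent r` and `r̂₁ = refineExponent r₁`. -/
noncomputable def refineExponent (r : ℝ) : ℝ := min (2 * r) (1 - 2 * r)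

lemma refineExponent_le (r : ℝ) : refineExponent r ≤ 1 - 2 * r := min_le_right _ _

lemma refineExponent_of_le {r : ℝ} (hr : r ≤ 1 / 4) : refineExponent r = 2 * r :=
  min_eq_left (by linarith)

lemma refineExponent_of_ge {r : ℝ} (hr : 1 / 4 ≤ r) : refineExponent r = 1 - 2 * r :=
  min_eq_right (by linarith)

lemma three_sub_sub_mul_le_kant {τ v : ℝ} (hτ : 0 < τ) (hv0 : 0 ≤ v) (hv : v ≤ 1 / 2) :
    3 - 4 * v - (2 - 4 * v) * τ ≤
      Kant τ ^ (-refineExponent (refineExponent v)) * τ ^ (4 * v - 2) := by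
  rw [rpow_neg (kant_pos hτ).le, show 4 * v - 2 = -(2 - 4 * v) by ring, rpow_neg hτ.le, ← mul_inv]
  rcases le_total v (1 / 4) with hv' | hv'
  · have e : refineExponent (refineExponent v) = min (1 - 4 * v) (1 - (1 - 4 * v)) := by
      rw [refineExponent_of_le hv', refineExponent, min_comm]
      ring_nf
    have := two_add_sub_mul_le_inv_kant hτ (by linarith : 0 ≤ 1 - 4 * v) (by linarith)
    rw [e, show 2 - 4 * v = 1 - 4 * v + 1 by ring]
    linarith
  · have e : refineExponent (refineExponent v) = min (2 - 4 * v) (1 - (2 - 4 * v)) := by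
      rw [refineExponent_of_ge hv', refineExponent]
      ring_nf
    have := one_add_sub_mul_le_inv_kant hτ (by linarith : 0 ≤ 2 - 4 * v) (by linarith)
    rw [e]
    linarith

lemma one_sub_add_mul_pow_four_le {τ v : ℝ} (hτ : 0 < τ) (hv0 : 0 ≤ v) (hv : v ≤ 1 / 2) :
    1 - v + v * τ ^ 4 ≤
      (1 - v) * (1 - τ ^ 2) ^ 2 - refineExponent v * (τ - τ ^ 2) ^ 2
        + Kant τ ^ (-refineExponent (refineExponent v)) * τ ^ (4 * v) := by
  have hpow : τ ^ 2 * τ ^ (4 * v - 2) = τ ^ (4 * v) := by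
    rw [← rpow_natCast, ← rpow_add hτ]; norm_num
  calc 1 - v + v * τ ^ 4
      = (1 - v) * (1 - τ ^ 2) ^ 2 - (1 - 2 * v) * (τ - τ ^ 2) ^ 2
          + τ ^ 2 * (3 - 4 * v - (2 - 4 * v) * τ) := by ring
    _ ≤ (1 - v) * (1 - τ ^ 2) ^ 2 - refineExponent v * (τ - τ ^ 2) ^ 2
          + τ ^ 2 * (Kant τ ^ (-refineExponent (refineExponent v)) * τ ^ (4 * v - 2)) := by
        gcongr
        · exact refineExponent_le v
        · exact three_sub_sub_mul_le_kant hτ hv0 hv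
    _ = _ := by rw [← hpow]; ring

lemma one_sub_mul_add_mul_le {a b v : ℝ} (ha : 0 < a) (hb : 0 < b) (hv0 : 0 ≤ v) (hv : v ≤ 1 / 2) :
    (1 - v) * a + v * b ≤
      (1 - v) * (√a - √b) ^ 2 - refineExponent v * ((a * b) ^ ((1 : ℝ) / 4) - √b) ^ 2
        + Kant ((b / a) ^ ((1 : ℝ) / 4)) ^ (-refineExponent (refineExponent v))
          * (a ^ (1 - v) * b ^ v) := by
  set τ := (b / a) ^ ((1 : ℝ) / 4) with hτ_def
  have hτ : 0 < τ := by positivity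
  have hb' : b = a * τ ^ 4 := by
    rw [hτ_def, show (1 : ℝ) / 4 = ((4 : ℕ) : ℝ)⁻¹ by norm_num,
      rpow_inv_natCast_pow (by positivity) (by norm_num)]
    field_simp
  have hsa : √a ^ 2 = a := sq_sqrt ha.le
  have hsb : √b = √a * τ ^ 2 := by
    rw [hb', sqrt_mul ha.le, show τ ^ 4 = (τ ^ 2) ^ 2 by ring, sqrt_sq (by positivity)]
  have hg : (a * b) ^ ((1 : ℝ) / 4) = √a * τ := by
    rw [show (1 : ℝ) / 4 = ((4 : ℕ) : ℝ)⁻¹ by norm_num,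
      ← pow_rpow_inv_natCast (by positivity : 0 ≤ √a * τ) (by norm_num : 4 ≠ 0), hb']
    congr 1
    linear_combination (-(a + √a ^ 2) * τ ^ 4) * hsa
  have hheinz : a ^ (1 - v) * b ^ v = a * τ ^ (4 * v) := by
    rw [hb', mul_rpow ha.le (by positivity), ← rpow_natCast_mul hτ.le, ← mul_assoc,
      ← rpow_add ha, sub_add_cancel, rpow_one, Nat.cast_ofNat]
  have := mul_le_mul_of_nonneg_left (one_sub_add_mul_pow_four_le hτ hv0 hv) ha.le
  rw [hsb, hg, hheinz]
  linear_combination this + v * hb'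
    - ((1 - v) * (1 - τ ^ 2) ^ 2 - refineExponent v * (τ - τ ^ 2) ^ 2) * hsa

lemma kant_rpow_div_comm {a b : ℝ} (ha : 0 ≤ a) (hb : 0 ≤ b) (p : ℝ) :
    Kant ((a / b) ^ p) = Kant ((b / a) ^ p) := by
  rw [← inv_div, inv_rpow (div_nonneg hb ha), kant_inv]

lemma add_div_two_le_of_le_half {a b v : ℝ} (ha : 0 < a) (hb : 0 < b) (hv0 : 0 ≤ v)
    (hv : v ≤ 1 / 2) :
    (a + b) / 2 ≤
      (1 - v) * (√a - √b) ^ 2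
        - 1 / 2 * refineExponent v * (((a * b) ^ ((1 : ℝ) / 4) - √a) ^ 2
            + ((a * b) ^ ((1 : ℝ) / 4) - √b) ^ 2)
        + Kant ((b / a) ^ ((1 : ℝ) / 4)) ^ (-refineExponent (refineExponent v))
          * ((a ^ v * b ^ (1 - v) + a ^ (1 - v) * b ^ v) / 2) := by
  have hab := one_sub_mul_add_mul_le ha hb hv0 hv
  have hba := one_sub_mul_add_mul_le hb ha hv0 hv
  rw [kant_rpow_div_comm ha.le hb.le, mul_comm b a] at hba
  linear_combination (hab + hba) / 2

theorem stmt_7 (a b v : ℝ) (ha : 0 < a) (hb : 0 < b) (hv0 : 0 < v) (hv : v < 1)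
    (h r R r1 rh1 : ℝ) (hh : h = b / a) (hr : r = min v (1 - v)) (hR : R = max v (1 - v))
    (hr1 : r1 = min (2 * r) (1 - 2 * r)) (hrh1 : rh1 = min (2 * r1) (1 - 2 * r1)) :
    (a + b) / 2 ≤
      R * (Real.sqrt a - Real.sqrt b) ^ 2
        - 1 / 2 * r1 * (((a * b) ^ ((1 : ℝ) / 4) - Real.sqrt a) ^ 2
            + ((a * b) ^ ((1 : ℝ) / 4) - Real.sqrt b) ^ 2)
        + Kant (h ^ ((1 : ℝ) / 4)) ^ (-rh1) * ((a ^ v * b ^ (1 - v) + a ^ (1 - v) * b ^ v) / 2) := by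
  subst hh hrh1 hr1 hr hR
  rcases le_total v (1 - v) with hle | hle
  · rw [min_eq_left hle, max_eq_right hle]
    exact add_div_two_le_of_le_half ha hb hv0.le (by linarith)
  · rw [min_eq_right hle, max_eq_left hle]
    have := add_div_two_le_of_le_half ha hb (by linarith : 0 ≤ 1 - v) (by linarith)
    rwa [sub_sub_cancel, add_comm (a ^ (1 - v) * b ^ v)] at this
end
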